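/- Suppose G is 2-torsion free. Then every k-commuting derivation of G is zero: if D: G → G is an R-linear derivation satisfying [D(g), g]_k = 0 for all g ∈ G, then D = 0. -/

import Mathlib

/-!
For an idempotent `p`, the Leibniz rule applied to `p = p * p` puts `D p` in the off-diagonal
Peirce part `{z | p * z + z * p = z}` of `p`. On that part `z ↦ [z, p]` is an involution, so
`[D p, p]_k = 0` forces `D p = 0`: a k-commuting derivation kills every idempotent. In the
generalized matrix algebra, `e`, `e + m` (`m ∈ M`) and `e + n` (`n ∈ N`) are idempotents, so `D`
vanishes on `M` and `N`. For `a ∈ A` and `m ∈ M`, `0 = D (a * m) = D a * m` with `D a ∈ A`, so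
faithfulness of `M` gives `D a = 0`; likewise on `B`.
-/

/-- The iterated commutator: `iterComm 0 x y = x`, `iterComm (i+1) x y = [iterComm i x y, y]`. -/
def iterComm {G : Type*} [Ring G] : ℕ → G → G → G
  | 0, x, _ => x
  | i + 1, x, y => iterComm i x y * y - y * iterComm i x y

section Ring

variable {G : Type*} [Ring G]

theorem iterComm_succ' (n : ℕ) (x y : G) :
    iterComm (n + 1) x y = iterComm n (x * y - y * x) y := by
  induction n with
  | zero => rfl
  | succ n ih => rw [iterComm, ih]; rfl

namespace IsIdempotentElem

variable {p z : G}

theorem mul_mul_eq_zero_of_mul_add_mul_eq (hp : IsIdempotentElem p) (hz : p * z + z * p = z) :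
    p * z * p = 0 := by
  have h : p * (p * z + z * p) * p = p * z * p := by rw [hz]
  simp only [mul_add, add_mul, ← mul_assoc, hp.eq] at h
  simpa only [mul_assoc, hp.eq, add_eq_right] using h

theorem commutator_mul_add_mul_eq (hp : IsIdempotentElem p) :
    p * (z * p - p * z) + (z * p - p * z) * p = z * p - p * z := by
  simp only [mul_sub, sub_mul, ← mul_assoc, hp.eq]
  rw [mul_assoc z p p, hp.eq]
  abel

theorem iterComm_two_eq_self (hp : IsIdempotentElem p) (hz : p * z + z * p = z) :
    iterComm 2 z p = z := by
  have hpzp := hp.mul_mul_eq_zero_of_mul_add_mul_eq hz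
  calc iterComm 2 z p = z * p + p * z - 2 • (p * z * p) := by
        simp only [iterComm, mul_sub, sub_mul, ← mul_assoc, hp.eq]
        rw [mul_assoc z p p, hp.eq]
        abel
    _ = z := by rw [hpzp, smul_zero, sub_zero, add_comm, hz]

theorem eq_zero_of_iterComm_eq_zero (hp : IsIdempotentElem p) {k : ℕ}
    (hz : p * z + z * p = z) (hk : iterComm k z p = 0) : z = 0 := by
  induction k generalizing z with
  | zero => exact hk
  | succ k ih =>
    rw [iterComm_succ'] at hk
    have hcomm : z * p - p * z = 0 := ih hp.commutator_mul_add_mul_eq hk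
    calc z = iterComm 2 z p := (hp.iterComm_two_eq_self hz).symm
      _ = (z * p - p * z) * p - p * (z * p - p * z) := rfl
      _ = 0 := by rw [hcomm, zero_mul, mul_zero, sub_zero]

theorem map_eq_zero_of_iterComm_eq_zero (hp : IsIdempotentElem p) (D : G → G)
    (hder : ∀ x y, D (x * y) = D x * y + x * D y) {k : ℕ} (hk : iterComm k (D p) p = 0) :
    D p = 0 := by
  refine hp.eq_zero_of_iterComm_eq_zero ?_ hk
  rw [add_comm, ← hder, hp.eq]

theorem add_of_mul_eq_of_mul_eq_zero {e m : G} (he : IsIdempotentElem e) (hem : e * m = m)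
    (hme : m * e = 0) : IsIdempotentElem (e + m) := by
  have hmm : m * m = 0 := by nth_rewrite 2 [← hem]; rw [← mul_assoc, hme, zero_mul]
  calc (e + m) * (e + m) = e * e + e * m + m * e + m * m := by noncomm_ring
    _ = e + m := by rw [he.eq, hem, hme, hmm, add_zero, add_zero]

theorem add_of_mul_eq_zero_of_mul_eq {e n : G} (he : IsIdempotentElem e) (hen : e * n = 0)
    (hne : n * e = n) : IsIdempotentElem (e + n) := by
  have hnn : n * n = 0 := by nth_rewrite 1 [← hne]; rw [mul_assoc, hen, mul_zero]
  calc (e + n) * (e + n) = e * e + e * n + n * e + n * n := by noncomm_ring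
    _ = e + n := by rw [he.eq, hen, hne, hnn, add_zero, add_zero]

end IsIdempotentElem

variable {F : Type*} [FunLike F G G] {e : G}

theorem map_mul_mul_of_map_eq_zero {D : F} (hder : ∀ x y, D (x * y) = D x * y + x * D y)
    {u v : G} (hu : D u = 0) (hv : D v = 0) (x : G) : D (u * x * v) = u * D x * v := by
  rw [hder, hder, hu, hv, zero_mul, zero_add, mul_zero, add_zero]

theorem map_mul_mul_one_sub_eq_zero [AddMonoidHomClass F G G] {D : F}
    (hidem : ∀ p, IsIdempotentElem p → D p = 0) (he : IsIdempotentElem e) (x : G) :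
    D (e * x * (1 - e)) = 0 := by
  have h := hidem _ <| he.add_of_mul_eq_of_mul_eq_zero (m := e * x * (1 - e))
    (by simp only [mul_assoc, he.mul_self_mul]) (by rw [mul_assoc, he.one_sub_mul_self, mul_zero])
  rwa [map_add, hidem e he, zero_add] at h

theorem map_one_sub_mul_mul_eq_zero [AddMonoidHomClass F G G] {D : F}
    (hidem : ∀ p, IsIdempotentElem p → D p = 0) (he : IsIdempotentElem e) (x : G) :
    D ((1 - e) * x * e) = 0 := by
  have h := hidem _ <| he.add_of_mul_eq_zero_of_mul_eq (n := (1 - e) * x * e)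
    (by rw [← mul_assoc, ← mul_assoc, he.mul_one_sub_self, zero_mul, zero_mul])
    (he.mul_mul_self _)
  rwa [map_add, hidem e he, zero_add] at h

theorem map_mul_mul_eq_zero_of_faithful [AddMonoidHomClass F G G] {D : F}
    (hder : ∀ x y, D (x * y) = D x * y + x * D y)
    (hidem : ∀ p, IsIdempotentElem p → D p = 0) (he : IsIdempotentElem e)
    (hfaith : ∀ a, a = e * a * e → (∀ m, m = e * m * (1 - e) → a * m = 0) → a = 0)
    (x : G) : D (e * x * e) = 0 := by
  have hDa := map_mul_mul_of_map_eq_zero hder (hidem e he) (hidem e he) x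
  rw [hDa]
  refine hfaith _ (by simp only [mul_assoc, he.mul_self_mul, he.eq]) fun m hm => ?_
  rw [hm]
  calc e * D x * e * (e * m * (1 - e)) = D (e * x * e * (e * m * (1 - e))) := by
        rw [hder, hDa, map_mul_mul_one_sub_eq_zero hidem he, mul_zero, add_zero]
    _ = D (e * (x * e * e * m) * (1 - e)) := by simp only [mul_assoc]
    _ = 0 := map_mul_mul_one_sub_eq_zero hidem he _

theorem map_one_sub_mul_mul_one_sub_eq_zero_of_faithful [AddMonoidHomClass F G G] {D : F}
    (hder : ∀ x y, D (x * y) = D x * y + x * D y) (hidem : ∀ p, IsIdempotentElem p → D p = 0)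
    (he : IsIdempotentElem e)
    (hfaith : ∀ b, b = (1 - e) * b * (1 - e) →
      (∀ m, m = e * m * (1 - e) → m * b = 0) → b = 0)
    (x : G) : D ((1 - e) * x * (1 - e)) = 0 := by
  have hDb := map_mul_mul_of_map_eq_zero hder (hidem _ he.one_sub) (hidem _ he.one_sub) x
  rw [hDb]
  refine hfaith _ (by simp only [mul_assoc, he.one_sub.mul_self_mul, he.one_sub.eq]) fun m hm => ?_
  rw [hm]
  calc e * m * (1 - e) * ((1 - e) * D x * (1 - e))
        = D (e * m * (1 - e) * ((1 - e) * x * (1 - e))) := by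
        rw [hder, hDb, map_mul_mul_one_sub_eq_zero hidem he, zero_mul, zero_add]
    _ = D (e * (m * (1 - e) * (1 - e) * x) * (1 - e)) := by simp only [mul_assoc]
    _ = 0 := map_mul_mul_one_sub_eq_zero hidem he _

end Ring

theorem kCommuting_derivation_eq_zero_general
    {R : Type*} [CommRing R] {G : Type*} [Ring G] [Algebra R G]
    (e : G) (he : e * e = e) (f : G) (hf : f = 1 - e)
    (hMfaithL : ∀ a : G, a = e * a * e → (∀ m : G, m = e * m * f → a * m = 0) → a = 0)
    (hMfaithR : ∀ b : G, b = f * b * f → (∀ m : G, m = e * m * f → m * b = 0) → b = 0)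
    (k : ℕ)
    (D : G →ₗ[R] G) (hder : ∀ x y : G, D (x * y) = D x * y + x * D y)
    (hD : ∀ g : G, iterComm k (D g) g = 0) :
    D = 0 := by
  subst hf
  have he : IsIdempotentElem e := he
  have hidem (p : G) (hp : IsIdempotentElem p) : D p = 0 :=
    hp.map_eq_zero_of_iterComm_eq_zero D hder (hD p)
  ext g
  have hpeirce : g = e * g * e + e * g * (1 - e) + (1 - e) * g * e + (1 - e) * g * (1 - e) := by
    noncomm_ring
  rw [LinearMap.zero_apply, hpeirce, map_add, map_add, map_add,
    map_mul_mul_eq_zero_of_faithful hder hidem he hMfaithL, map_mul_mul_one_sub_eq_zero hidem he,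
    map_one_sub_mul_mul_eq_zero hidem he,
    map_one_sub_mul_mul_one_sub_eq_zero_of_faithful hder hidem he hMfaithR]
  simp only [add_zero]

/-- if the generalized matrix algebra `G` is 2-torsion free, then every
k-commuting derivation of `G` is zero. -/
theorem kCommuting_derivation_eq_zero
    {R : Type*} [CommRing R] {G : Type*} [Ring G] [Algebra R G]
    (e : G) (he : e * e = e) (f : G) (hf : f = 1 - e)
    (hMN : (∃ m : G, m = e * m * f ∧ m ≠ 0) ∨ (∃ n : G, n = f * n * e ∧ n ≠ 0))
    (hMfaithL : ∀ a : G, a = e * a * e → (∀ m : G, m = e * m * f → a * m = 0) → a = 0)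
    (hMfaithR : ∀ b : G, b = f * b * f → (∀ m : G, m = e * m * f → m * b = 0) → b = 0)
    (htf : ∀ g : G, g + g = 0 → g = 0)
    (k : ℕ) (hk : 2 ≤ k)
    (D : G →ₗ[R] G) (hder : ∀ x y : G, D (x * y) = D x * y + x * D y)
    (hD : ∀ g : G, iterComm k (D g) g = 0) :
    D = 0 :=
  kCommuting_derivation_eq_zero_general e he f hf hMfaithL hMfaithR k D hder hD
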